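/- arXiv:1603.02596 — 3 statements merged into one kernel-verified Lean document; each statement's English description precedes it below -/
import Mathlib

section
/- Let $T>0$ and define $V:[0,T]\times\mathbf{R}\to\mathbf{R}$ by $V(t,x)=-x$ if $x\le 0$ and $V(t,x)=-x(T-t)-x$ if $x>0$. Then for every $s\in[0,T)$ the set inclusions $D_x^{1,-}V(s,0)\subset\{-1\}\subset D_x^{1,+}V(s,0)$ hold and both inclusions are strict: $D_x^{1,-}V(s,0)=\emptyset\subsetneq\{-1\}$ and $\{-1\}\subsetneq D_x^{1,+}V(s,0)$. -/
/-- The value function of Example 3.1: `V(t,x) = -x` for `x ≤ 0`,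
`V(t,x) = -x(T-t) - x` for `x > 0`. -/
noncomputable def V (T t x : ℝ) : ℝ := if x ≤ 0 then -x else -x * (T - t) - x

/-- First-order super-jet (in the x-variable) of a real function `W` at `x₀`. -/
def superJetX (W : ℝ → ℝ) (x₀ : ℝ) : Set ℝ :=
  {p | ∀ ε > (0 : ℝ), ∃ δ > (0 : ℝ), ∀ x : ℝ, |x - x₀| < δ →
    W x ≤ W x₀ + p * (x - x₀) + ε * |x - x₀|}

/-- First-order sub-jet (in the x-variable) of a real function `W` at `x₀`. -/
def subJetX (W : ℝ → ℝ) (x₀ : ℝ) : Set ℝ :=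
  {p | ∀ ε > (0 : ℝ), ∃ δ > (0 : ℝ), ∀ x : ℝ, |x - x₀| < δ →
    W x ≥ W x₀ + p * (x - x₀) - ε * |x - x₀|}

lemma mem_superJetX_V (T s p : ℝ) (h1 : -(T - s + 1) ≤ p) (h2 : p ≤ -1) :
    p ∈ superJetX (fun x => V T s x) 0 := by
  intro ε hε
  refine ⟨1, one_pos, fun x _ => ?_⟩
  simp only [V, sub_zero]
  rcases le_or_gt x 0 with hx | hx
  · rw [if_pos hx, if_pos le_rfl, abs_of_nonpos hx]
    nlinarith
  · rw [if_neg (not_le.mpr hx), if_pos le_rfl, abs_of_pos hx]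
    nlinarith

/-- For every `s ∈ [0,T)` the inclusions
`D_x^{1,-}V(s,0) ⊂ {-1} ⊂ D_x^{1,+}V(s,0)` hold and both are strict:
the sub-jet is empty (hence a proper subset of `{-1}`), and `{-1}` is a proper
subset of the super-jet. -/
theorem subJet_ssubset_singleton_ssubset_superJet (T : ℝ) (hT : 0 < T)
    (s : ℝ) (hs : s ∈ Set.Ico 0 T) :
    subJetX (fun x => V T s x) 0 = ∅ ∧
      subJetX (fun x => V T s x) 0 ⊂ {(-1 : ℝ)} ∧
      ({(-1 : ℝ)} : Set ℝ) ⊂ superJetX (fun x => V T s x) 0 := by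
  have hts : 0 < T - s := sub_pos.mpr hs.2
  have hempty : subJetX (fun x => V T s x) 0 = ∅ := by
    rw [Set.eq_empty_iff_forall_notMem]
    intro p hp
    obtain ⟨δ, hδ, h⟩ := hp ((T - s) / 4) (by positivity)
    have h1 := h (δ / 2) (by rw [sub_zero, abs_of_pos (by positivity)]; linarith)
    have h2 := h (-(δ / 2)) (by rw [sub_zero, abs_of_neg (by linarith)]; linarith)
    simp only [V, sub_zero] at h1 h2
    rw [if_neg (by push_neg; positivity), if_pos le_rfl,
      abs_of_pos (by positivity : (0:ℝ) < δ / 2)] at h1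
    rw [if_pos (by linarith : -(δ/2) ≤ 0), if_pos le_rfl,
      abs_of_neg (by linarith : -(δ/2) < 0)] at h2
    nlinarith
  refine ⟨hempty, by rw [hempty]; exact Set.empty_ssubset.mpr (Set.singleton_nonempty _), ?_⟩
  constructor
  · rw [Set.singleton_subset_iff]
    exact mem_superJetX_V T s (-1) (by linarith) le_rfl
  · intro hsub
    have hmem : -(T - s + 1) ∈ superJetX (fun x => V T s x) 0 :=
      mem_superJetX_V T s _ le_rfl (by linarith)
    have := hsub hmem
    simp only [Set.mem_singleton_iff] at this
    linarith [neg_injective this]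
end

section
/- Let $T>0$ and define $V:[0,T]\times\mathbf{R}\to\mathbf{R}$ by $V(t,x)=-x$ if $x\le 0$ and $V(t,x)=-x(T-t)-x$ if $x>0$. Then $V$ is a viscosity subsolution of the generalized Hamilton–Jacobi–Bellman equation $-v_t(t,x)-\tfrac{1}{2}x^2 v_{xx}(t,x)+x+v(t,x)+\sup_{u\in[0,1]}\{-v_x(t,x)\,x\,u\}=0$ on $[0,T)\times\mathbf{R}$ with terminal condition $v(T,x)=-x$. That is: $V(T,x)\le -x$ for all $x\in\mathbf{R}$, and for every function $\varphi:[0,T]\times\mathbf{R}\to\mathbf{R}$ which is once continuously differentiable in $t$ and twice continuously differentiable in $x$, whenever $V-\varphi$ attains a local maximum at a point $(t_0,x_0)\in[0,T)\times\mathbf{R}$, one has $-\varphi_t(t_0,x_0)-\tfrac{1}{2}x_0^2\varphi_{xx}(t_0,x_0)+x_0+V(t_0,x_0)+\sup_{u\in[0,1]}\{-\varphi_x(t_0,x_0)\,x_0\,u\}\le 0$. -/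
open Set Filter Topology

private lemma right_deriv_nonpos {f : ℝ → ℝ} {a δ d : ℝ} (hδ : 0 < δ)
    (hf : HasDerivAt f d a) (h : ∀ x ∈ Set.Ioo a (a + δ), f x ≤ f a) : d ≤ 0 := by
  have hw : HasDerivWithinAt f d (Set.Ioi a) a := hf.hasDerivWithinAt
  rw [hasDerivWithinAt_iff_tendsto_slope,
    Set.diff_singleton_eq_self (by simp : a ∉ Set.Ioi a)] at hw
  refine le_of_tendsto hw ?_
  filter_upwards [Ioo_mem_nhdsGT_of_mem (show a ∈ Set.Ico a (a + δ) from ⟨le_refl a, by linarith⟩)] with x hx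
  rw [slope_def_field]
  apply div_nonpos_of_nonpos_of_nonneg
  · linarith [h x hx]
  · linarith [hx.1]

private lemma second_deriv_nonpos {g g1 : ℝ → ℝ} {a d : ℝ}
    (hg : ∀ x, HasDerivAt g (g1 x) x) (hg1 : HasDerivAt g1 d a)
    (hmax : IsLocalMax g a) : d ≤ 0 := by
  by_contra hd
  push_neg at hd
  have h0 : g1 a = 0 := hmax.hasDerivAt_eq_zero (hg a)
  have hw : Tendsto (slope g1 a) (𝓝[>] a) (𝓝 d) := by
    have h := (hg1.hasDerivWithinAt (s := Set.Ioi a))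
    rwa [hasDerivWithinAt_iff_tendsto_slope,
      Set.diff_singleton_eq_self (by simp : a ∉ Set.Ioi a)] at h
  have hpos : ∀ᶠ x in 𝓝[>] a, 0 < slope g1 a x :=
    hw.eventually (eventually_gt_nhds hd)
  rw [eventually_nhdsWithin_iff, Metric.eventually_nhds_iff] at hpos
  obtain ⟨δ1, hδ1, hs⟩ := hpos
  rw [IsLocalMax, IsMaxFilter, Metric.eventually_nhds_iff] at hmax
  obtain ⟨δ2, hδ2, hm⟩ := hmax
  set b := a + min δ1 δ2 / 2 with hb
  have hmin : 0 < min δ1 δ2 := lt_min hδ1 hδ2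
  have hab : a < b := by simp only [hb]; linarith
  have hg1pos : ∀ x ∈ Set.Ioo a b, 0 < g1 x := by
    intro x hx
    have hxa : 0 < x - a := by linarith [hx.1]
    have hd1 : dist x a < δ1 := by
      rw [Real.dist_eq, abs_of_pos hxa]
      have h2 := min_le_left δ1 δ2
      have := hx.2
      simp only [hb] at this
      linarith
    have hsl := hs hd1 hx.1
    rw [slope_def_field, h0, sub_zero] at hsl
    have := mul_pos hsl hxa
    rwa [div_mul_cancel₀ _ (ne_of_gt hxa)] at this
  have hcont : Continuous g := continuous_iff_continuousAt.2 fun x => (hg x).continuousAt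
  have hsm : StrictMonoOn g (Set.Icc a b) :=
    strictMonoOn_of_deriv_pos (convex_Icc a b) hcont.continuousOn
      (fun x hx => by rw [interior_Icc] at hx; rw [(hg x).deriv]; exact hg1pos x hx)
  have h1 : g a < g b := hsm ⟨le_refl a, hab.le⟩ ⟨hab.le, le_refl b⟩ hab
  have h2 : g b ≤ g a := by
    apply hm
    rw [Real.dist_eq, abs_of_pos (by linarith)]
    have := min_le_right δ1 δ2
    simp only [hb]
    linarith
  linarith

private lemma sSup_linear (c : ℝ) :
    sSup ((fun u => c * u) '' Set.Icc (0:ℝ) 1) = max c 0 := by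
  have hbdd : ∀ y ∈ (fun u => c * u) '' Set.Icc (0:ℝ) 1, y ≤ max c 0 := by
    rintro y ⟨u, hu, rfl⟩
    rcases le_or_gt 0 c with h | h
    · calc c * u ≤ c * 1 := by nlinarith [hu.1, hu.2]
        _ = c := mul_one c
        _ ≤ max c 0 := le_max_left _ _
    · calc c * u ≤ 0 := mul_nonpos_of_nonpos_of_nonneg h.le hu.1
        _ ≤ max c 0 := le_max_right _ _
  refine le_antisymm (Real.sSup_le hbdd (le_max_right c 0)) ?_
  apply le_csSup ⟨max c 0, fun y hy => hbdd y hy⟩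
  rcases le_total c 0 with h | h
  · rw [max_eq_right h]
    exact ⟨0, by simp, by simp⟩
  · rw [max_eq_left h]
    exact ⟨1, by simp, by simp⟩

/-- `V` is a viscosity subsolution of the generalized HJB equation
`-v_t - (1/2) x² v_{xx} + x + v + sup_{u ∈ [0,1]} {-v_x x u} = 0` on `[0,T) × ℝ`
with terminal condition `v(T,x) = -x`: the terminal inequality `V(T,x) ≤ -x` holds,
and for every test function `φ` of class `C^{1,2}` (with partial derivatives
`φt, φx, φxx` in the indicated variables, all jointly continuous), whenever `V - φ`
attains a local maximum (relative to `[0,T] × ℝ`) at `(t₀,x₀) ∈ [0,T) × ℝ`, the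
subsolution inequality holds at `(t₀,x₀)`. -/
theorem V_viscosity_subsolution (T : ℝ) (hT : 0 < T) :
    (∀ x : ℝ, V T T x ≤ -x) ∧
    ∀ φ φt φx φxx : ℝ → ℝ → ℝ,
      (∀ t x : ℝ, HasDerivAt (fun τ => φ τ x) (φt t x) t) →
      (∀ t x : ℝ, HasDerivAt (fun y => φ t y) (φx t x) x) →
      (∀ t x : ℝ, HasDerivAt (fun y => φx t y) (φxx t x) x) →
      Continuous (fun q : ℝ × ℝ => φt q.1 q.2) →
      Continuous (fun q : ℝ × ℝ => φx q.1 q.2) →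
      Continuous (fun q : ℝ × ℝ => φxx q.1 q.2) →
      ∀ t₀ x₀ : ℝ, t₀ ∈ Set.Ico 0 T →
      (∃ ε > (0 : ℝ), ∀ t ∈ Set.Icc 0 T, ∀ x : ℝ, |t - t₀| < ε → |x - x₀| < ε →
        V T t x - φ t x ≤ V T t₀ x₀ - φ t₀ x₀) →
      -φt t₀ x₀ - (1 / 2) * x₀ ^ 2 * φxx t₀ x₀ + x₀ + V T t₀ x₀ +
          sSup ((fun u => -(φx t₀ x₀) * x₀ * u) '' Set.Icc (0 : ℝ) 1) ≤ 0 := by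
  constructor
  · intro x
    unfold V
    split_ifs with h
    · exact le_refl _
    · nlinarith
  · rintro φ φt φx φxx hφt hφx hφxx _ _ _ t₀ x₀ ht₀ ⟨ε, hε, hmax⟩
    obtain ⟨ht₀0, ht₀T⟩ := ht₀
    -- time inequality helper
    have time : ∀ d : ℝ, HasDerivAt (fun t => V T t x₀ - φ t x₀) d t₀ → d ≤ 0 := by
      intro d hf
      refine right_deriv_nonpos (δ := min ε (T - t₀)) (lt_min hε (by linarith)) hf ?_
      intro t ht
      have h1 : t₀ ≤ t := ht.1.le
      have h2 : t < t₀ + min ε (T - t₀) := ht.2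
      have hmε := min_le_left ε (T - t₀)
      have hmT := min_le_right ε (T - t₀)
      refine hmax t ⟨by linarith, by linarith⟩ x₀ ?_ (by simpa using hε)
      rw [abs_of_nonneg (by linarith)]
      linarith
    rw [sSup_linear]
    rcases lt_trichotomy x₀ 0 with hx | hx | hx
    · -- x₀ < 0 : V T t x = -x near x₀
      have hVt : (fun t => V T t x₀ - φ t x₀) = fun t => -x₀ - φ t x₀ := by
        funext t; simp [V, hx.le]
      have htime : -φt t₀ x₀ ≤ 0 := by
        have := time (-(φt t₀ x₀)) (by rw [hVt]; exact (hφt t₀ x₀).const_sub (-x₀))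
        linarith
      have hloc : IsLocalMax (fun x => -x - φ t₀ x) x₀ := by
        rw [IsLocalMax, IsMaxFilter, Metric.eventually_nhds_iff]
        refine ⟨min ε (-x₀), lt_min hε (by linarith), fun y hy => ?_⟩
        rw [Real.dist_eq] at hy
        have hyε : |y - x₀| < ε := lt_of_lt_of_le hy (min_le_left _ _)
        have hy0 : y ≤ 0 := by
          have := abs_lt.1 (lt_of_lt_of_le hy (min_le_right _ _))
          linarith [this.2]
        have := hmax t₀ ⟨ht₀0, ht₀T.le⟩ y (by simpa using hε) hyε
        simpa [V, hy0, hx.le] using this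
      have h1 : ∀ y, HasDerivAt (fun x => -x - φ t₀ x) (-1 - φx t₀ y) y := by
        intro y
        exact ((hasDerivAt_id y).neg.sub (hφx t₀ y)).congr_deriv (by ring)
      have hfirst : -1 - φx t₀ x₀ = 0 := hloc.hasDerivAt_eq_zero (h1 x₀)
      have hsecond : -φxx t₀ x₀ ≤ 0 :=
        second_deriv_nonpos h1 ((hφxx t₀ x₀).const_sub (-1)) hloc
      have hφxval : φx t₀ x₀ = -1 := by linarith
      have hmaxval : max (-(φx t₀ x₀) * x₀) 0 = 0 := by
        rw [hφxval]; rw [max_eq_right (by linarith)]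
      rw [hmaxval]
      simp only [V, hx.le, if_pos]
      nlinarith [sq_nonneg x₀]
    · -- x₀ = 0
      subst hx
      have hVt : (fun t => V T t (0:ℝ) - φ t 0) = fun t => -φ t 0 := by
        funext t; simp [V]
      have htime : -φt t₀ 0 ≤ 0 := by
        have := time (-(φt t₀ 0)) (by rw [hVt]; exact (hφt t₀ 0).neg)
        linarith
      have hV0 : V T t₀ 0 = 0 := by simp [V]
      rw [hV0]
      have : max (-(φx t₀ 0) * 0) 0 = 0 := by simp
      rw [this]
      nlinarith
    · -- x₀ > 0
      set c : ℝ := -(T - t₀) - 1 with hc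
      have hVt : (fun t => V T t x₀ - φ t x₀) = fun t => (-x₀ * (T - t) - x₀) - φ t x₀ := by
        funext t; simp [V, not_le.2 hx]
      have htime : x₀ - φt t₀ x₀ ≤ 0 := by
        refine time _ ?_
        rw [hVt]
        have hlin : HasDerivAt (fun t : ℝ => -x₀ * (T - t) - x₀) x₀ t₀ := by
          have h := (((hasDerivAt_const t₀ T).sub (hasDerivAt_id t₀)).const_mul
              (-x₀)).sub_const x₀
          simpa using h
        exact (hlin.sub (hφt t₀ x₀)).congr_deriv (by ring)
      have hloc : IsLocalMax (fun x => c * x - φ t₀ x) x₀ := by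
        rw [IsLocalMax, IsMaxFilter, Metric.eventually_nhds_iff]
        refine ⟨min ε x₀, lt_min hε hx, fun y hy => ?_⟩
        rw [Real.dist_eq] at hy
        have hyε : |y - x₀| < ε := lt_of_lt_of_le hy (min_le_left _ _)
        have hy0 : 0 < y := by
          have := abs_lt.1 (lt_of_lt_of_le hy (min_le_right _ _))
          linarith [this.1]
        have := hmax t₀ ⟨ht₀0, ht₀T.le⟩ y (by simpa using hε) hyε
        have e1 : V T t₀ y = c * y := by simp [V, not_le.2 hy0, hc]; ring
        have e2 : V T t₀ x₀ = c * x₀ := by simp [V, not_le.2 hx, hc]; ring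
        simp only [e1, e2] at this
        simpa using this
      have h1 : ∀ y, HasDerivAt (fun x => c * x - φ t₀ x) (c - φx t₀ y) y := by
        intro y
        exact (((hasDerivAt_id y).const_mul c).sub (hφx t₀ y)).congr_deriv (by ring)
      have hfirst : c - φx t₀ x₀ = 0 := hloc.hasDerivAt_eq_zero (h1 x₀)
      have hsecond : -φxx t₀ x₀ ≤ 0 :=
        second_deriv_nonpos h1 ((hφxx t₀ x₀).const_sub c) hloc
      have hφxval : φx t₀ x₀ = c := by linarith
      have hmaxval : max (-(φx t₀ x₀) * x₀) 0 = (T - t₀ + 1) * x₀ := by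
        rw [hφxval, hc]
        rw [max_eq_left (by nlinarith)]
        ring
      rw [hmaxval]
      have hVval : V T t₀ x₀ = -x₀ * (T - t₀) - x₀ := by simp [V, not_le.2 hx]
      rw [hVval]
      nlinarith [sq_nonneg x₀]
end

section
/- Let $T>0$ and define $V:[0,T]\times\mathbf{R}\to\mathbf{R}$ by $V(t,x)=-x$ if $x\le 0$ and $V(t,x)=-x(T-t)-x$ if $x>0$. Then $V$ is a viscosity supersolution of the generalized Hamilton–Jacobi–Bellman equation $-v_t(t,x)-\tfrac{1}{2}x^2 v_{xx}(t,x)+x+v(t,x)+\sup_{u\in[0,1]}\{-v_x(t,x)\,x\,u\}=0$ on $[0,T)\times\mathbf{R}$ with terminal condition $v(T,x)=-x$. That is: $V(T,x)\ge -x$ for all $x\in\mathbf{R}$, and for every function $\varphi:[0,T]\times\mathbf{R}\to\mathbf{R}$ which is once continuously differentiable in $t$ and twice continuously differentiable in $x$, whenever $V-\varphi$ attains a local minimum at a point $(t_0,x_0)\in[0,T)\times\mathbf{R}$, one has $-\varphi_t(t_0,x_0)-\tfrac{1}{2}x_0^2\varphi_{xx}(t_0,x_0)+x_0+V(t_0,x_0)+\sup_{u\in[0,1]}\{-\varphi_x(t_0,x_0)\,x_0\,u\}\ge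 0$. -/
open Filter Set Topology

/-- One-sided first-order condition: if `f` has a local minimum at `t₀ ∈ [0,T)`
relative to `[0,T]`, then `f' t₀ ≥ 0`. -/
lemma right_min_deriv_nonneg (f : ℝ → ℝ) (f' t₀ T ε : ℝ)
    (hd : HasDerivAt f f' t₀) (ht₀ : t₀ ∈ Set.Ico 0 T) (hε : 0 < ε)
    (hmin : ∀ t ∈ Set.Icc 0 T, |t - t₀| < ε → f t ≥ f t₀) : 0 ≤ f' := by
  have h : Tendsto (slope f t₀) (𝓝[>] t₀) (𝓝 f') :=
    (hasDerivAt_iff_tendsto_slope.mp hd).mono_left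
      (nhdsWithin_mono _ (fun x hx => ne_of_gt hx))
  refine ge_of_tendsto h ?_
  have hmem : Set.Ioo t₀ (min T (t₀ + ε)) ∈ 𝓝[>] t₀ :=
    Ioo_mem_nhdsGT_of_mem ⟨le_refl _, lt_min ht₀.2 (by linarith)⟩
  filter_upwards [hmem] with t ht
  have htT : t ≤ T := le_of_lt (lt_of_lt_of_le ht.2 (min_le_left _ _))
  have htε : t < t₀ + ε := lt_of_lt_of_le ht.2 (min_le_right _ _)
  have h1 : f t ≥ f t₀ := hmin t ⟨le_trans ht₀.1 ht.1.le, htT⟩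
    (abs_lt.mpr ⟨by linarith [ht.1], by linarith⟩)
  rw [slope_def_field]
  have h2 := ht.1
  exact div_nonneg (by linarith) (by linarith)

/-- Second-order condition: if `f` has a local minimum at `a` and is twice
differentiable there, then `f'' a ≥ 0`. -/
lemma isLocalMin_second_deriv_nonneg (f f' : ℝ → ℝ) (f'' a : ℝ)
    (hd : ∀ x, HasDerivAt f (f' x) x) (hd2 : HasDerivAt f' f'' a)
    (hmin : IsLocalMin f a) : 0 ≤ f'' := by
  by_contra hc
  push_neg at hc
  have hfa : f' a = 0 := hmin.hasDerivAt_eq_zero (hd a)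
  have hs : Tendsto (slope f' a) (𝓝[>] a) (𝓝 f'') :=
    (hasDerivAt_iff_tendsto_slope.mp hd2).mono_left
      (nhdsWithin_mono _ (fun x hx => ne_of_gt hx))
  have hev : ∀ᶠ x in 𝓝[>] a, slope f' a x < 0 := hs.eventually (Iio_mem_nhds hc)
  have hneg : ∀ᶠ x in 𝓝[>] a, f' x < 0 := by
    filter_upwards [hev, self_mem_nhdsWithin] with x h1 h2
    rw [slope_def_field, hfa, sub_zero] at h1
    have hxa : (0:ℝ) < x - a := by simpa [sub_pos] using h2
    by_contra hge
    push_neg at hge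
    exact absurd (div_nonneg hge hxa.le) (not_le.mpr h1)
  have hmin' : ∀ᶠ x in 𝓝[>] a, f a ≤ f x := hmin.filter_mono nhdsWithin_le_nhds
  obtain ⟨u, hau, hu⟩ := mem_nhdsGT_iff_exists_Ioo_subset.mp (hneg.and hmin')
  set b := (a + u) / 2 with hb
  have hab : a < b := by simp only [hb]; have := hau; simp at this ⊢; linarith [this]
  have hbu : b < u := by simp only [hb]; have : a < u := hau; linarith
  have hS : ∀ x ∈ Set.Ioo a u, f' x < 0 ∧ f a ≤ f x := fun x hx => hu hx
  have hanti : StrictAntiOn f (Set.Icc a b) := by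
    apply strictAntiOn_of_deriv_neg (convex_Icc a b)
      (fun x _ => (hd x).continuousAt.continuousWithinAt)
    intro x hx
    rw [interior_Icc] at hx
    rw [(hd x).deriv]
    exact (hS x ⟨hx.1, lt_trans hx.2 hbu⟩).1
  have h1 : f b < f a := hanti ⟨le_refl a, hab.le⟩ ⟨hab.le, le_refl b⟩ hab
  have h2 : f a ≤ f b := (hS b ⟨hab, hbu⟩).2
  linarith

/-- `V` is a viscosity supersolution of the generalized HJB equation
`-v_t - (1/2) x² v_{xx} + x + v + sup_{u ∈ [0,1]} {-v_x x u} = 0` on `[0,T) × ℝ`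
with terminal condition `v(T,x) = -x`: the terminal inequality `V(T,x) ≥ -x` holds,
and for every test function `φ` of class `C^{1,2}` (with partial derivatives
`φt, φx, φxx` in the indicated variables, all jointly continuous), whenever `V - φ`
attains a local minimum (relative to `[0,T] × ℝ`) at `(t₀,x₀) ∈ [0,T) × ℝ`, the
supersolution inequality holds at `(t₀,x₀)`. -/
theorem V_viscosity_supersolution (T : ℝ) (hT : 0 < T) :
    (∀ x : ℝ, V T T x ≥ -x) ∧
    ∀ φ φt φx φxx : ℝ → ℝ → ℝ,
      (∀ t x : ℝ, HasDerivAt (fun τ => φ τ x) (φt t x) t) →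
      (∀ t x : ℝ, HasDerivAt (fun y => φ t y) (φx t x) x) →
      (∀ t x : ℝ, HasDerivAt (fun y => φx t y) (φxx t x) x) →
      Continuous (fun q : ℝ × ℝ => φt q.1 q.2) →
      Continuous (fun q : ℝ × ℝ => φx q.1 q.2) →
      Continuous (fun q : ℝ × ℝ => φxx q.1 q.2) →
      ∀ t₀ x₀ : ℝ, t₀ ∈ Set.Ico 0 T →
      (∃ ε > (0 : ℝ), ∀ t ∈ Set.Icc 0 T, ∀ x : ℝ, |t - t₀| < ε → |x - x₀| < ε →
        V T t x - φ t x ≥ V T t₀ x₀ - φ t₀ x₀) →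
      -φt t₀ x₀ - (1 / 2) * x₀ ^ 2 * φxx t₀ x₀ + x₀ + V T t₀ x₀ +
          sSup ((fun u => -(φx t₀ x₀) * x₀ * u) '' Set.Icc (0 : ℝ) 1) ≥ 0 := by
  constructor
  · intro x
    by_cases hx : x ≤ 0 <;> simp [V, hx]
  intro φ φt φx φxx hφt hφx hφxx _ _ _ t₀ x₀ ht₀ ⟨ε, hε, hmin⟩
  -- bound for the sSup
  have hbdd : BddAbove ((fun u => -(φx t₀ x₀) * x₀ * u) '' Set.Icc (0 : ℝ) 1) :=
    (isCompact_Icc.image (by continuity)).bddAbove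
  have hS0 : (0:ℝ) ≤ sSup ((fun u => -(φx t₀ x₀) * x₀ * u) '' Set.Icc (0 : ℝ) 1) :=
    le_csSup hbdd ⟨0, by norm_num⟩
  have hS1 : -(φx t₀ x₀) * x₀ ≤
      sSup ((fun u => -(φx t₀ x₀) * x₀ * u) '' Set.Icc (0 : ℝ) 1) :=
    le_csSup hbdd ⟨1, by norm_num⟩
  -- time direction
  have ht₀Icc : t₀ ∈ Set.Icc 0 T := ⟨ht₀.1, ht₀.2.le⟩
  have hmint : ∀ t ∈ Set.Icc 0 T, |t - t₀| < ε →
      (fun t => V T t x₀ - φ t x₀) t ≥ (fun t => V T t x₀ - φ t x₀) t₀ := by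
    intro t ht htε
    exact hmin t ht x₀ htε (by simpa using hε)
  by_cases hx : x₀ ≤ 0
  · -- case x₀ ≤ 0
    have hVt : (fun t => V T t x₀ - φ t x₀) = (fun t => -x₀ - φ t x₀) := by
      funext t; simp [V, hx]
    have hdt : HasDerivAt (fun t => V T t x₀ - φ t x₀) (0 - φt t₀ x₀) t₀ := by
      rw [hVt]; exact (hasDerivAt_const t₀ (-x₀)).sub (hφt t₀ x₀)
    have hφt0 : (0:ℝ) ≤ 0 - φt t₀ x₀ :=
      right_min_deriv_nonneg _ _ t₀ T ε hdt ht₀ hε hmint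
    rcases lt_or_eq_of_le hx with hxlt | hxeq
    · -- x₀ < 0 : second order condition in x
      have hψmin : IsLocalMin (fun x => -x - φ t₀ x) x₀ := by
        have hball : Metric.ball x₀ (min ε (-x₀)) ∈ 𝓝 x₀ :=
          Metric.ball_mem_nhds x₀ (lt_min hε (by linarith))
        filter_upwards [hball] with x hxb
        rw [Metric.mem_ball, Real.dist_eq] at hxb
        have hx0 : x ≤ 0 := by
          have := abs_lt.mp (lt_of_lt_of_le hxb (min_le_right _ _))
          linarith [this.2]
        have h := hmin t₀ ht₀Icc x (by simpa using hε)
          (lt_of_lt_of_le hxb (min_le_left _ _))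
        simpa [V, hx, hx0] using h
      have hdx : ∀ x, HasDerivAt (fun x => -x - φ t₀ x) (-1 - φx t₀ x) x := by
        intro x
        exact (hasDerivAt_id x).neg.sub (hφx t₀ x)
      have hdx2 : HasDerivAt (fun x => -1 - φx t₀ x) (-φxx t₀ x₀) x₀ := by
        have := (hφxx t₀ x₀).const_sub (-1 : ℝ)
        simpa using this
      have hφxx0 : (0:ℝ) ≤ -φxx t₀ x₀ :=
        isLocalMin_second_deriv_nonneg _ _ _ _ hdx hdx2 hψmin
      have hV0 : V T t₀ x₀ = -x₀ := by simp [V, hx]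
      rw [hV0]
      nlinarith [hS0, hφt0, mul_nonneg (sq_nonneg x₀) hφxx0]
    · -- x₀ = 0
      subst hxeq
      have hV0 : V T t₀ (0:ℝ) = 0 := by simp [V]
      rw [hV0]
      nlinarith [hS0, hφt0]
  · -- case x₀ > 0
    push_neg at hx
    have hVt : (fun t => V T t x₀ - φ t x₀) = (fun t => -x₀ * (T - t) - x₀ - φ t x₀) := by
      funext t; simp [V, not_le.mpr hx]
    have hdt : HasDerivAt (fun t => V T t x₀ - φ t x₀) (-x₀ * (0 - 1) - 0 - φt t₀ x₀) t₀ := by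
      rw [hVt]
      exact ((((hasDerivAt_const t₀ T).sub (hasDerivAt_id t₀)).const_mul
        (-x₀)).sub (hasDerivAt_const t₀ x₀)).sub (hφt t₀ x₀)
    have hφt0 : (0:ℝ) ≤ -x₀ * (0 - 1) - 0 - φt t₀ x₀ :=
      right_min_deriv_nonneg _ _ t₀ T ε hdt ht₀ hε hmint
    -- spatial direction: local min of ψ
    have hψmin : IsLocalMin (fun x => -x * (T - t₀) - x - φ t₀ x) x₀ := by
      have hball : Metric.ball x₀ (min ε x₀) ∈ 𝓝 x₀ :=
        Metric.ball_mem_nhds x₀ (lt_min hε hx)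
      filter_upwards [hball] with x hxb
      rw [Metric.mem_ball, Real.dist_eq] at hxb
      have hx0 : 0 < x := by
        have := abs_lt.mp (lt_of_lt_of_le hxb (min_le_right _ _))
        linarith [this.1]
      have h := hmin t₀ ht₀Icc x (by simpa using hε)
        (lt_of_lt_of_le hxb (min_le_left _ _))
      simpa [V, not_le.mpr hx, not_le.mpr hx0] using h
    have hdx : ∀ x, HasDerivAt (fun x => -x * (T - t₀) - x - φ t₀ x)
        (-(T - t₀) - 1 - φx t₀ x) x := by
      intro x
      have h1 : HasDerivAt (fun x : ℝ => -x * (T - t₀)) (-(T - t₀)) x := by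
        have := (hasDerivAt_id x).neg.mul_const (T - t₀)
        simpa using this
      exact ((h1.sub (hasDerivAt_id x)).sub (hφx t₀ x))
    have hφxval : -(T - t₀) - 1 - φx t₀ x₀ = 0 :=
      hψmin.hasDerivAt_eq_zero (hdx x₀)
    have hdx2 : HasDerivAt (fun x => -(T - t₀) - 1 - φx t₀ x) (-φxx t₀ x₀) x₀ := by
      have := (hφxx t₀ x₀).const_sub (-(T - t₀) - 1)
      simpa using this
    have hφxx0 : (0:ℝ) ≤ -φxx t₀ x₀ :=
      isLocalMin_second_deriv_nonneg _ _ _ _ hdx hdx2 hψmin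
    have hφxval' : φx t₀ x₀ = -(T - t₀) - 1 := by linarith
    have hV0 : V T t₀ x₀ = -x₀ * (T - t₀) - x₀ := by simp [V, not_le.mpr hx]
    have hS1' : (T - t₀ + 1) * x₀ ≤
        sSup ((fun u => -(φx t₀ x₀) * x₀ * u) '' Set.Icc (0 : ℝ) 1) := by
      have : (T - t₀ + 1) * x₀ = -(φx t₀ x₀) * x₀ := by rw [hφxval']; ring
      linarith [hS1]
    rw [hV0]
    nlinarith [hS1', hφt0, mul_nonneg (sq_nonneg x₀) hφxx0]
end
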